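/- Abstract bounded Löb self-play cooperation: assume a family of bounded provability predicates Box_k with the properties that (i) Box is monotone in k, (ii) any outright proof of ∀k>k₂, p(k) yields, for all sufficiently large k, Box_k(p(k)) (bounded necessitation with logarithmic overhead for numerals), and (iii) the Parametric Bounded Löb principle: if S ⊢ ∀k>k₁ (Box_{f(k)}(p(k)) → p(k)) for an increasing computable f with f(k) eventually exceeding c·log k, then S ⊢ ∀k>k₂, p(k) for some k₂. Define DUPOC(k) to cooperate iff Box_k('opponent cooperates with DUPOC(k)'). Then for all sufficiently large k, DUPOC(k) playing against DUPOC(k) yields mutual cooperation. -/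
import Mathlib


/-- Actions in the open-source Prisoner's Dilemma. -/
inductive Act : Type
  | C : Act  -- cooperate
  | D : Act  -- defect
deriving DecidableEq

/-- **Abstract bounded Löb self-play cooperation**: under an abstract family
of bounded provability predicates `Box k` satisfying (i) monotonicity in `k`,
(ii) bounded necessitation, and (iii) the Parametric Bounded Löb principle,
the agent `DUPOC(k)` — which cooperates iff `Box k` of "the opponent
cooperates with DUPOC(k)" — achieves mutual cooperation in self-play for all
sufficiently large `k`. -/
theorem dupoc_selfplay_cooperation {Agent : Type}
    (plays : Agent → Agent → Act)
    (Box : ℕ → Prop → Prop)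
    -- (i) monotonicity in the length bound
    (mono : ∀ (j k : ℕ) (φ : Prop), j ≤ k → Box j φ → Box k φ)
    -- (ii) bounded necessitation: an outright proof of `∀ k > k₂, p k`
    -- yields `Box k (p k)` for all sufficiently large `k`
    (nec : ∀ (p : ℕ → Prop) (k₂ : ℕ), (∀ k > k₂, p k) →
      ∃ k₃ : ℕ, ∀ k > k₃, Box k (p k))
    -- (iii) Parametric Bounded Löb principle: if `Box_{f k} (p k) → p k`
    -- holds for all `k > k₁`, with `f` increasing, computable, and eventually
    -- dominating `c · log k`, then `p k` holds for all sufficiently large `k`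
    (pblt : ∀ (p : ℕ → Prop) (f : ℕ → ℕ) (k₁ : ℕ),
      Monotone f → Computable f →
      (∃ c : ℝ, 0 < c ∧ ∃ khat : ℕ, ∀ k > khat, c * Real.log k < (f k : ℝ)) →
      (∀ k > k₁, Box (f k) (p k) → p k) →
      ∃ k₂ : ℕ, ∀ k > k₂, p k)
    (dupoc : ℕ → Agent)
    (hdupoc : ∀ (k : ℕ) (opp : Agent),
      plays (dupoc k) opp = Act.C ↔ Box k (plays opp (dupoc k) = Act.C)) :
    ∃ k₂ : ℕ, ∀ k > k₂, plays (dupoc k) (dupoc k) = Act.C := by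
  refine pblt (fun k => plays (dupoc k) (dupoc k) = Act.C) id 0 monotone_id Computable.id ?_ ?_
  · refine ⟨1, one_pos, 1, fun k hk => ?_⟩
    rw [one_mul]
    have hk' : (0:ℝ) < k := by exact_mod_cast Nat.pos_of_ne_zero (by omega)
    calc Real.log k ≤ k - 1 := Real.log_le_sub_one_of_pos hk'
    _ < (id k : ℝ) := by simp
  · intro k _ h
    exact (hdupoc k (dupoc k)).mpr h
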